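/- Let ρ ∈ (0, 1/2) and let f, g be negative real numbers. For ω > 0 define γ(ω) = (f + iωg + ω²)/(f + iωg), and define μ₋(ω) = (γ(ω) − √(γ(ω)² − 4ρ(1−ρ)))/(2ρ) and μ₊(ω) = (γ(ω) + √(γ(ω)² − 4ρ(1−ρ)))/(2ρ), where √ is the principal complex square root. Then, with κ = (1−ρ)/ρ: lim_{ω→0⁺} (μ₋(ω) − 1)/ω² = −1/((2ρ−1)|f|) and lim_{ω→0⁺} (μ₊(ω) − κ)/ω² = κ/((2ρ−1)|f|). (These are the leading terms of the Taylor expansions μ₋ = 1 − ω²/((2ρ−1)|f|) + O(ω³) and μ₊ = κ(1 + ω²/((2ρ−1)|f|)) + O(ω³).) -/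

import Mathlib

/-!
`μ₋(ω)` and `μ₊(ω)` are the values at `z = γ(ω)` of the two roots `(z ∓ √(z² - 4ρ(1-ρ)))/(2ρ)`
of `ρ μ² - z μ + (1 - ρ)`. At `z = 1` the discriminant is `(1 - 2ρ)² > 0`, so both roots are
holomorphic there, with values `1` and `κ` and derivatives `-1/(1 - 2ρ)` and `κ/(1 - 2ρ)`.
Since `γ(ω) - 1 = ω²/(f + iωg)` is nonzero for `ω ≠ 0` and `(γ(ω) - 1)/ω² → 1/f`, the chain
rule for difference quotients gives both limits as the derivative times `1/f`.
-/

open Filter Topology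

/-- `γ(ω) = (f + iωg + ω²)/(f + iωg)`. -/
noncomputable def gam (f g ω : ℝ) : ℂ :=
  ((f : ℂ) + Complex.I * ω * g + (ω : ℂ) ^ 2) / ((f : ℂ) + Complex.I * ω * g)

/-- `μ₋(ω)`, using the principal complex square root. -/
noncomputable def muMinus (ρ f g ω : ℝ) : ℂ :=
  (gam f g ω - (gam f g ω ^ 2 - 4 * (ρ : ℂ) * (1 - (ρ : ℂ))) ^ ((1 : ℂ) / 2)) / (2 * (ρ : ℂ))

/-- `μ₊(ω)`, using the principal complex square root. -/
noncomputable def muPlus (ρ f g ω : ℝ) : ℂ :=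
  (gam f g ω + (gam f g ω ^ 2 - 4 * (ρ : ℂ) * (1 - (ρ : ℂ))) ^ ((1 : ℂ) / 2)) / (2 * (ρ : ℂ))

theorem HasDerivAt.tendsto_sub_div_of_tendsto {𝕜 α : Type*} [NontriviallyNormedField 𝕜]
    {μ : 𝕜 → 𝕜} {μ' z₀ c : 𝕜} {γ φ : α → 𝕜} {l : Filter α} (hμ : HasDerivAt μ μ' z₀)
    (hγ : Tendsto γ l (𝓝[≠] z₀)) (hφ : Tendsto (fun x => (γ x - z₀) / φ x) l (𝓝 c)) :
    Tendsto (fun x => (μ (γ x) - μ z₀) / φ x) l (𝓝 (μ' * c)) := by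
  refine ((hasDerivAt_iff_tendsto_slope.mp hμ).comp hγ |>.mul hφ).congr' ?_
  filter_upwards [tendsto_nhdsWithin_iff.mp hγ |>.2] with x hx
  rw [Function.comp_apply, slope_def_field, div_mul_div_cancel₀ (sub_ne_zero.mpr hx)]

section Roots

variable {ρ : ℝ}

noncomputable def discSqrt (ρ : ℝ) (z : ℂ) : ℂ :=
  (z ^ 2 - 4 * (ρ : ℂ) * (1 - (ρ : ℂ))) ^ ((1 : ℂ) / 2)

noncomputable def rootMinus (ρ : ℝ) (z : ℂ) : ℂ := (z - discSqrt ρ z) / (2 * (ρ : ℂ))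

noncomputable def rootPlus (ρ : ℝ) (z : ℂ) : ℂ := (z + discSqrt ρ z) / (2 * (ρ : ℂ))

theorem muMinus_eq_rootMinus (ρ f g ω : ℝ) : muMinus ρ f g ω = rootMinus ρ (gam f g ω) := rfl

theorem muPlus_eq_rootPlus (ρ f g ω : ℝ) : muPlus ρ f g ω = rootPlus ρ (gam f g ω) := rfl

theorem discSqrt_one (hρ : ρ < 1 / 2) : discSqrt ρ 1 = 1 - 2 * ρ := by
  rw [discSqrt, show (1 : ℂ) ^ 2 - 4 * ρ * (1 - ρ) = (1 - 2 * ρ) ^ 2 by ring, one_div]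
  exact Complex.sq_cpow_two_inv (by simp; linarith)

theorem hasDerivAt_discSqrt_one (hρ : ρ < 1 / 2) :
    HasDerivAt (discSqrt ρ) (1 / (1 - 2 * ρ)) 1 := by
  have h2ρ : (1 - 2 * ρ : ℂ) ≠ 0 := by exact_mod_cast (by linarith : (1 - 2 * ρ : ℝ) ≠ 0)
  have hdisc : (1 : ℂ) ^ 2 - 4 * ρ * (1 - ρ) = (((1 - 2 * ρ) ^ 2 : ℝ) : ℂ) := by push_cast; ring
  have hslit : (1 : ℂ) ^ 2 - 4 * ρ * (1 - ρ) ∈ Complex.slitPlane :=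
    hdisc ▸ Complex.ofReal_mem_slitPlane.mpr (pow_pos (by linarith) 2)
  refine (hasDerivAt_pow 2 (1 : ℂ) |>.sub_const (4 * (ρ : ℂ) * (1 - ρ))).cpow_const
    (c := 1 / 2) hslit |>.congr_deriv ?_
  have hsqrt := discSqrt_one hρ
  rw [discSqrt] at hsqrt
  rw [Complex.cpow_sub _ _ (by rw [hdisc]; exact_mod_cast pow_ne_zero 2 h2ρ), Complex.cpow_one,
    hsqrt, hdisc]
  push_cast
  field_simp

theorem rootMinus_one (hρ0 : ρ ≠ 0) (hρ : ρ < 1 / 2) : rootMinus ρ 1 = 1 := by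
  have : (ρ : ℂ) ≠ 0 := by exact_mod_cast hρ0
  rw [rootMinus, discSqrt_one hρ]
  field_simp
  ring

theorem rootPlus_one (hρ0 : ρ ≠ 0) (hρ : ρ < 1 / 2) : rootPlus ρ 1 = ((1 - ρ) / ρ : ℝ) := by
  have : (ρ : ℂ) ≠ 0 := by exact_mod_cast hρ0
  rw [rootPlus, discSqrt_one hρ]
  push_cast
  field_simp
  ring

theorem hasDerivAt_rootMinus_one (hρ0 : ρ ≠ 0) (hρ : ρ < 1 / 2) :
    HasDerivAt (rootMinus ρ) (-1 / (1 - 2 * ρ)) 1 := by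
  have : (ρ : ℂ) ≠ 0 := by exact_mod_cast hρ0
  have h2ρ : (1 - 2 * ρ : ℂ) ≠ 0 := by exact_mod_cast (by linarith : (1 - 2 * ρ : ℝ) ≠ 0)
  refine ((hasDerivAt_id 1).sub (hasDerivAt_discSqrt_one hρ)).div_const _ |>.congr_deriv ?_
  field_simp
  ring

theorem hasDerivAt_rootPlus_one (hρ0 : ρ ≠ 0) (hρ : ρ < 1 / 2) :
    HasDerivAt (rootPlus ρ) ((1 - ρ) / ρ / (1 - 2 * ρ)) 1 := by
  have : (ρ : ℂ) ≠ 0 := by exact_mod_cast hρ0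
  have h2ρ : (1 - 2 * ρ : ℂ) ≠ 0 := by exact_mod_cast (by linarith : (1 - 2 * ρ : ℝ) ≠ 0)
  refine ((hasDerivAt_id 1).add (hasDerivAt_discSqrt_one hρ)).div_const _ |>.congr_deriv ?_
  field_simp
  ring

end Roots

section Gamma

variable {f : ℝ} (g : ℝ)

theorem ofReal_add_I_mul_ne_zero (hf : f ≠ 0) (ω : ℝ) : (f : ℂ) + Complex.I * ω * g ≠ 0 := by
  intro h
  exact hf (by simpa using congrArg Complex.re h)

theorem gam_sub_one (hf : f ≠ 0) (ω : ℝ) :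
    gam f g ω - 1 = (ω : ℂ) ^ 2 / ((f : ℂ) + Complex.I * ω * g) := by
  rw [gam, sub_eq_iff_eq_add, add_div, div_self (ofReal_add_I_mul_ne_zero g hf ω), add_comm]

theorem tendsto_gam_sub_one_div_sq (hf : f ≠ 0) :
    Tendsto (fun ω : ℝ => (gam f g ω - 1) / (ω : ℂ) ^ 2) (𝓝[≠] 0) (𝓝 (1 / (f : ℂ))) := by
  have hcont : Continuous fun ω : ℝ => (f : ℂ) + Complex.I * ω * g := by fun_prop
  have := (tendsto_const_nhds (x := (1 : ℂ))).div (hcont.tendsto 0) (by simpa using hf)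
  simp only [Complex.ofReal_zero, mul_zero, zero_mul, add_zero] at this
  refine (this.mono_left nhdsWithin_le_nhds).congr' ?_
  filter_upwards [self_mem_nhdsWithin] with ω hω
  have : (ω : ℂ) ^ 2 ≠ 0 := pow_ne_zero 2 (Complex.ofReal_ne_zero.mpr hω)
  rw [Pi.div_apply, gam_sub_one g hf, div_div_cancel_left' this, one_div]

theorem tendsto_gam_nhdsNE (hf : f ≠ 0) : Tendsto (gam f g) (𝓝[≠] 0) (𝓝[≠] 1) := by
  have hcont : Continuous fun ω : ℝ => (ω : ℂ) ^ 2 / ((f : ℂ) + Complex.I * ω * g) :=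
    (by fun_prop : Continuous fun ω : ℝ => (ω : ℂ) ^ 2).div (by fun_prop)
      (ofReal_add_I_mul_ne_zero g hf)
  have hlim : Tendsto (fun ω => gam f g ω - 1) (𝓝[≠] 0) (𝓝 0) := by
    simp_rw [gam_sub_one g hf]
    simpa using (hcont.tendsto 0).mono_left nhdsWithin_le_nhds
  refine tendsto_nhdsWithin_iff.mpr ⟨by simpa using hlim.add_const 1, ?_⟩
  filter_upwards [self_mem_nhdsWithin] with ω hω
  rw [Set.mem_compl_singleton_iff, ← sub_ne_zero, gam_sub_one g hf]
  exact div_ne_zero (pow_ne_zero 2 (Complex.ofReal_ne_zero.mpr hω)) (ofReal_add_I_mul_ne_zero g hf ω)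

end Gamma

theorem stmt_12_general (ρ : ℝ) (hρ : ρ ∈ Set.Ioo (0 : ℝ) (1 / 2)) (f g : ℝ)
    (hf : f < 0) :
    Tendsto (fun ω : ℝ => (muMinus ρ f g ω - 1) / (ω : ℂ) ^ 2)
        (nhdsWithin 0 (Set.Ioi 0))
        (nhds (((-1 / ((2 * ρ - 1) * |f|) : ℝ) : ℂ))) ∧
    Tendsto (fun ω : ℝ => (muPlus ρ f g ω - (((1 - ρ) / ρ : ℝ) : ℂ)) / (ω : ℂ) ^ 2)
        (nhdsWithin 0 (Set.Ioi 0))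
        (nhds ((((1 - ρ) / ρ / ((2 * ρ - 1) * |f|) : ℝ) : ℂ))) := by
  obtain ⟨hρ0, hρ⟩ := hρ
  have hγ := (tendsto_gam_nhdsNE g hf.ne).mono_left (nhdsGT_le_nhdsNE 0)
  have hφ := (tendsto_gam_sub_one_div_sq g hf.ne).mono_left (nhdsGT_le_nhdsNE 0)
  rw [abs_of_neg hf, show (2 * ρ - 1) * -f = (1 - 2 * ρ) * f by ring]
  constructor
  · convert (hasDerivAt_rootMinus_one hρ0.ne' hρ).tendsto_sub_div_of_tendsto hγ hφ using 2
    · rw [muMinus_eq_rootMinus, rootMinus_one hρ0.ne' hρ]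
    · push_cast
      simp only [mul_one_div, div_div]
  · convert (hasDerivAt_rootPlus_one hρ0.ne' hρ).tendsto_sub_div_of_tendsto hγ hφ using 2
    · rw [muPlus_eq_rootPlus, rootPlus_one hρ0.ne' hρ]
    · push_cast
      simp only [mul_one_div, div_div, mul_assoc]

theorem stmt_12 (ρ : ℝ) (hρ : ρ ∈ Set.Ioo (0 : ℝ) (1 / 2)) (f g : ℝ)
    (hf : f < 0) (hg : g < 0) :
    Tendsto (fun ω : ℝ => (muMinus ρ f g ω - 1) / (ω : ℂ) ^ 2)
        (nhdsWithin 0 (Set.Ioi 0))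
        (nhds (((-1 / ((2 * ρ - 1) * |f|) : ℝ) : ℂ))) ∧
    Tendsto (fun ω : ℝ => (muPlus ρ f g ω - (((1 - ρ) / ρ : ℝ) : ℂ)) / (ω : ℂ) ^ 2)
        (nhdsWithin 0 (Set.Ioi 0))
        (nhds ((((1 - ρ) / ρ / ((2 * ρ - 1) * |f|) : ℝ) : ℂ))) :=
  stmt_12_general ρ hρ f g hf
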